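/- arXiv:2309.05355 — 3 statements merged into one kernel-verified Lean document; each statement's English description precedes it below -/
import Mathlib

section
/- With notation as in the torsor automorphism setting: the automorphism group of a G-torsor E modulo the relation of G-equivariant natural isomorphism is isomorphic to the quotient group G/τ(H). Concretely, a G-equivariant automorphism F of E is G-equivariantly naturally isomorphic to the identity if and only if, under the canonical isomorphism Aut(E) ≅ Aut(E₀) ≅ G, it corresponds to an element of τ(H). -/
/-- A crossed module of groups. -/
structure CrossedModule (G H : Type*) [Group G] [Group H] where
  τ : H →* G
  α : G →* MulAut H
  equivar : ∀ g h, τ (α g h) = g * τ h * g⁻¹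
  peiffer : ∀ h h', α (τ h) h' = h * h' * h⁻¹

section

variable {G H : Type*} [Group G] [Group H] (cm : CrossedModule G H)
variable {E₀ E₁ : Type*}
variable (sE tE : E₁ → E₀) (uE : E₀ → E₁)
variable (compE : ∀ δ δ' : E₁, sE δ = tE δ' → E₁)
variable (act₀ : E₀ → G → E₀) (act₁ : E₁ → H × G → E₁)

/-- A `G`-equivariant endofunctor `(F₁, F₀)` of the groupoid `[E₁ ⇉ E₀]` acted on by the
2-group `[H ⋊_α G ⇉ G]`. -/
def IsEqFunctor (F₁ : E₁ → E₁) (F₀ : E₀ → E₀) : Prop :=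
  (∀ p g, F₀ (act₀ p g) = act₀ (F₀ p) g) ∧
  (∀ δ a, F₁ (act₁ δ a) = act₁ (F₁ δ) a) ∧
  (∀ δ, sE (F₁ δ) = F₀ (sE δ)) ∧
  (∀ δ, tE (F₁ δ) = F₀ (tE δ)) ∧
  (∀ p, F₁ (uE p) = uE (F₀ p)) ∧
  (∀ δ δ' (h : sE δ = tE δ') (h' : sE (F₁ δ) = tE (F₁ δ')),
    F₁ (compE δ δ' h) = compE (F₁ δ) (F₁ δ') h')

/-- A `G`-equivariant natural isomorphism from the identity functor to `(F₁,F₀)`: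
a family `η(x) : x ⟶ F₀(x)` of morphisms of `E`, equivariant (`η(x·g) = η(x)·1_g`) and
natural. -/
def IsEqNatIso (F₁ : E₁ → E₁) (F₀ : E₀ → E₀) (η : E₀ → E₁) : Prop :=
  (∀ x, sE (η x) = x) ∧
  (∀ x, tE (η x) = F₀ x) ∧
  (∀ x g, η (act₀ x g) = act₁ (η x) (1, g)) ∧
  (∀ (δ : E₁) (h₁ : sE (F₁ δ) = tE (η (sE δ))) (h₂ : sE (η (tE δ)) = tE δ),
    compE (F₁ δ) (η (sE δ)) h₁ = compE (η (tE δ)) δ h₂)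

theorem compE_congr {a a' b b' : E₁} (ha : a = a') (hb : b = b')
    (h : sE a = tE b) (h' : sE a' = tE b') :
    compE a b h = compE a' b' h' := by subst ha; subst hb; rfl

/-- The automorphism group of a 2-group torsor `E = [E₁ ⇉ E₀]` modulo `G`-equivariant
natural isomorphism is `G/τ(H)`.  Concretely: a `G`-equivariant automorphism `(F₁,F₀)` of
`E` is `G`-equivariantly naturally isomorphic to the identity if and only if, under the
canonical isomorphism `Aut(E₀) ≅ G`, `f ↦ δ₀(z, f(z))`, it corresponds to an element of
`τ(H)`. -/
theorem stmt9
    (act₀_one : ∀ p, act₀ p 1 = p)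
    (act₀_mul : ∀ p g g', act₀ (act₀ p g) g' = act₀ p (g * g'))
    (act₁_one : ∀ δ, act₁ δ (1, 1) = δ)
    (act₁_mul : ∀ δ a b, act₁ (act₁ δ a) b = act₁ δ (a.1 * cm.α a.2 b.1, a.2 * b.2))
    (s_act : ∀ δ h g, sE (act₁ δ (h, g)) = act₀ (sE δ) g)
    (t_act : ∀ δ h g, tE (act₁ δ (h, g)) = act₀ (tE δ) (cm.τ h * g))
    (u_act : ∀ p g, uE (act₀ p g) = act₁ (uE p) (1, g))
    (comp_act : ∀ δ δ' (hc : sE δ = tE δ') (h₂ h₁ : H) (g₂ g₁ : G),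
      g₂ = cm.τ h₁ * g₁ →
      ∀ (hc' : sE (act₁ δ (h₂, g₂)) = tE (act₁ δ' (h₁, g₁))),
      compE (act₁ δ (h₂, g₂)) (act₁ δ' (h₁, g₁)) hc' =
        act₁ (compE δ δ' hc) (h₂ * h₁, g₁))
    (s_u : ∀ p, sE (uE p) = p) (t_u : ∀ p, tE (uE p) = p)
    (s_comp : ∀ δ δ' h, sE (compE δ δ' h) = sE δ')
    (t_comp : ∀ δ δ' h, tE (compE δ δ' h) = tE δ)
    (ne₀ : Nonempty E₀)
    (free₀ : ∀ p g g', act₀ p g = act₀ p g' → g = g')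
    (trans₀ : ∀ p q : E₀, ∃ g, act₀ p g = q)
    (free₁ : ∀ δ a b, act₁ δ a = act₁ δ b → a = b)
    (trans₁ : ∀ δ δ' : E₁, ∃ a, act₁ δ a = δ')
    -- the division map of the torsor `E₀` and a fixed base point `z`
    (δ₀ : E₀ → E₀ → G) (hδ₀ : ∀ x y, act₀ x (δ₀ x y) = y) (z : E₀)
    -- a `G`-equivariant automorphism of `E`
    (F₁ : E₁ → E₁) (F₀ : E₀ → E₀)
    (hF₁ : Function.Bijective F₁) (hF₀ : Function.Bijective F₀)
    (hF : IsEqFunctor sE tE uE compE act₀ act₁ F₁ F₀) :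
    (∃ η : E₀ → E₁, IsEqNatIso sE tE compE act₀ act₁ F₁ F₀ η) ↔
      δ₀ z (F₀ z) ∈ cm.τ.range := by
  obtain ⟨hF0, hF1, hFs, hFt, hFu, hFc⟩ := hF
  -- the key cancellation lemma for δ₀
  have hδ₀' : ∀ (x : E₀) (g : G), δ₀ z (act₀ x g) = δ₀ z x * g := by
    intro x g
    apply free₀ z
    rw [hδ₀, ← act₀_mul, hδ₀]
  constructor
  · rintro ⟨η, hs, ht, heq, hnat⟩
    obtain ⟨⟨h, g⟩, ha⟩ := trans₁ (uE z) (η z)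
    have hg : g = 1 := by
      apply free₀ z
      rw [act₀_one]
      have := hs z
      rw [← ha, s_act, s_u] at this
      exact this
    refine ⟨h, ?_⟩
    apply free₀ z
    rw [hδ₀]
    have := ht z
    rw [← ha, t_act, t_u, hg, mul_one] at this
    exact this
  · rintro ⟨h, hh⟩
    have hFz : F₀ z = act₀ z (cm.τ h) := by rw [hh, hδ₀]
    refine ⟨fun x => act₁ (uE z) (h, δ₀ z x), ?_, ?_, ?_, ?_⟩
    · intro x; rw [s_act, s_u, hδ₀]
    · intro x
      rw [t_act, t_u, ← act₀_mul, ← hFz]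
      have : x = act₀ z (δ₀ z x) := (hδ₀ z x).symm
      rw [this, hF0, ← this]
    · intro x g
      rw [act₁_mul]
      simp only [map_one, mul_one, hδ₀' x g]
    · intro δ h₁ h₂
      obtain ⟨⟨k, g⟩, rfl⟩ := trans₁ (uE z) δ
      have hsδ : sE (act₁ (uE z) (k, g)) = act₀ z g := by rw [s_act, s_u]
      have htδ : tE (act₁ (uE z) (k, g)) = act₀ z (cm.τ k * g) := by rw [t_act, t_u]
      have hc : sE (uE z) = tE (uE z) := by rw [s_u, t_u]
      have hF₁δ : F₁ (act₁ (uE z) (k, g)) = act₁ (uE z) (h * k * h⁻¹, cm.τ h * g) := by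
        rw [hF1, hFu, hFz, u_act, act₁_mul]
        simp only [one_mul, cm.peiffer]
      have hηs : act₁ (uE z) (h, δ₀ z (sE (act₁ (uE z) (k, g)))) = act₁ (uE z) (h, g) := by
        rw [hsδ]
        congr 1
        have : δ₀ z (act₀ z g) = g := by
          apply free₀ z; rw [hδ₀]
        rw [this]
      have hηt : act₁ (uE z) (h, δ₀ z (tE (act₁ (uE z) (k, g)))) =
          act₁ (uE z) (h, cm.τ k * g) := by
        rw [htδ]
        congr 1
        have : δ₀ z (act₀ z (cm.τ k * g)) = cm.τ k * g := by
          apply free₀ z; rw [hδ₀]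
        rw [this]
      have hs1 : sE (act₁ (uE z) (h * k * h⁻¹, cm.τ h * g)) = tE (act₁ (uE z) (h, g)) := by
        rw [s_act, t_act, s_u, t_u]
      have hs2 : sE (act₁ (uE z) (h, cm.τ k * g)) = tE (act₁ (uE z) (k, g)) := by
        rw [s_act, t_act, s_u, t_u]
      calc compE (F₁ (act₁ (uE z) (k, g)))
            (act₁ (uE z) (h, δ₀ z (sE (act₁ (uE z) (k, g))))) h₁
          = compE (act₁ (uE z) (h * k * h⁻¹, cm.τ h * g)) (act₁ (uE z) (h, g)) hs1 :=
            compE_congr sE tE compE hF₁δ hηs _ _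
        _ = act₁ (compE (uE z) (uE z) hc) (h * k * h⁻¹ * h, g) :=
            comp_act _ _ hc _ _ _ _ rfl _
        _ = act₁ (compE (uE z) (uE z) hc) (h * k, g) := by
            rw [inv_mul_cancel_right]
        _ = compE (act₁ (uE z) (h, cm.τ k * g)) (act₁ (uE z) (k, g)) hs2 :=
            (comp_act _ _ hc h k (cm.τ k * g) g rfl hs2).symm
        _ = compE (act₁ (uE z) (h, δ₀ z (tE (act₁ (uE z) (k, g)))))
            (act₁ (uE z) (k, g)) h₂ := compE_congr sE tE compE hηt.symm rfl _ _

end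
end

section
/- With the unital and compositional deviations H_u: E₀ → H and H_m: X₁ ×_{s,t} X₁ → H of a quasi connection C (defined by C(1_{π(p)},p) = 1_p(H_u(p),e) and C(γ₂, μ_C(γ₁,p))∘C(γ₁,p) = C(γ₂∘γ₁,p)(H_m(γ₂,γ₁),e)), the associator identity holds: for composable γ₃, γ₂, γ₁, H_m(γ₃,γ₂)⁻¹ · H_m(γ₃∘γ₂, γ₁)⁻¹ = H_m(γ₂,γ₁)⁻¹ · H_m(γ₃, γ₂∘γ₁)⁻¹. -/
/-- With the unital and compositional deviations `H_u : E₀ → H` and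
`H_m : X₁ ×_{s,t} X₁ → H` of a quasi connection `C` on a principal 2-bundle
`π : [E₁ ⇉ E₀] → [X₁ ⇉ X₀]` for the 2-group associated to the crossed module `(G,H,τ,α)` —
defined by `C(1_{π(p)},p) = 1_p(H_u(p),e)` and
`C(γ₂, μ_C(γ₁,p)) ∘ C(γ₁,p) = C(γ₂∘γ₁,p)(H_m(γ₂,γ₁),e)` with `μ_C = t∘C` — the associator
identity holds: for composable `γ₃, γ₂, γ₁`,
`H_m(γ₃,γ₂)⁻¹ · H_m(γ₃∘γ₂,γ₁)⁻¹ = H_m(γ₂,γ₁)⁻¹ · H_m(γ₃,γ₂∘γ₁)⁻¹`. -/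
theorem stmt18 {G H : Type*} [Group G] [Group H] (cm : CrossedModule G H)
    {X₀ X₁ E₀ E₁ : Type*}
    (sX tX : X₁ → X₀) (uX : X₀ → X₁) (cX : X₁ → X₁ → X₁)
    (sE tE : E₁ → E₀) (uE : E₀ → E₁) (cE : E₁ → E₁ → E₁)
    (π₀ : E₀ → X₀) (π₁ : E₁ → X₁)
    (act₀ : E₀ → G → E₀) (act₁ : E₁ → H × G → E₁)
    -- groupoid axioms for `X`
    (cX_s : ∀ γ₂ γ₁, sX γ₂ = tX γ₁ → sX (cX γ₂ γ₁) = sX γ₁)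
    (cX_t : ∀ γ₂ γ₁, sX γ₂ = tX γ₁ → tX (cX γ₂ γ₁) = tX γ₂)
    (cX_assoc : ∀ γ₃ γ₂ γ₁, sX γ₃ = tX γ₂ → sX γ₂ = tX γ₁ →
      cX (cX γ₃ γ₂) γ₁ = cX γ₃ (cX γ₂ γ₁))
    -- composition in `E` and its compatibility with source/target
    (cE_s : ∀ δ₂ δ₁, sE δ₂ = tE δ₁ → sE (cE δ₂ δ₁) = sE δ₁)
    (cE_t : ∀ δ₂ δ₁, sE δ₂ = tE δ₁ → tE (cE δ₂ δ₁) = tE δ₂)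
    (cE_assoc : ∀ δ₃ δ₂ δ₁, sE δ₃ = tE δ₂ → sE δ₂ = tE δ₁ →
      cE (cE δ₃ δ₂) δ₁ = cE δ₃ (cE δ₂ δ₁))
    -- the action of the 2-group `[H⋊_αG ⇉ G]` on `E`, free on `E₁`, functorial
    (act₁_one : ∀ δ, act₁ δ (1, 1) = δ)
    (act₁_mul : ∀ δ a b, act₁ (act₁ δ a) b = act₁ δ (a.1 * cm.α a.2 b.1, a.2 * b.2))
    (free₁ : ∀ δ a b, act₁ δ a = act₁ δ b → a = b)
    (act₀_one : ∀ p, act₀ p 1 = p)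
    (act₀_mul : ∀ p g g', act₀ (act₀ p g) g' = act₀ p (g * g'))
    (sE_act : ∀ δ h g, sE (act₁ δ (h, g)) = act₀ (sE δ) g)
    (tE_act : ∀ δ h g, tE (act₁ δ (h, g)) = act₀ (tE δ) (cm.τ h * g))
    (uE_act : ∀ p g, uE (act₀ p g) = act₁ (uE p) (1, g))
    (interchange : ∀ δ₂ δ₁ (h₂ h₁ : H) (g₂ g₁ : G),
      sE δ₂ = tE δ₁ → g₂ = cm.τ h₁ * g₁ →
      cE (act₁ δ₂ (h₂, g₂)) (act₁ δ₁ (h₁, g₁)) = act₁ (cE δ₂ δ₁) (h₂ * h₁, g₁))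
    -- bundle data
    (π₀_act : ∀ p g, π₀ (act₀ p g) = π₀ p)
    (sX_uX : ∀ x, sX (uX x) = x)
    -- the quasi connection `C`
    (C : X₁ → E₀ → E₁)
    (C_s : ∀ γ p, sX γ = π₀ p → sE (C γ p) = p)
    (C_π : ∀ γ p, sX γ = π₀ p → π₁ (C γ p) = γ)
    (C_act : ∀ γ p g, sX γ = π₀ p → C γ (act₀ p g) = act₁ (C γ p) (1, g))
    (π₀_tC : ∀ γ p, sX γ = π₀ p → π₀ (tE (C γ p)) = tX γ)
    -- the unital and compositional deviations
    (Hu : E₀ → H) (Hm : X₁ → X₁ → H)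
    (Hu_def : ∀ p, C (uX (π₀ p)) p = act₁ (uE p) (Hu p, 1))
    (Hm_def : ∀ γ₂ γ₁ p, sX γ₁ = π₀ p → sX γ₂ = tX γ₁ →
      cE (C γ₂ (tE (C γ₁ p))) (C γ₁ p) = act₁ (C (cX γ₂ γ₁) p) (Hm γ₂ γ₁, 1))
    -- available facts: the values of `H_m` are central and `α`-invariant
    (Hm_center : ∀ γ₂ γ₁, Hm γ₂ γ₁ ∈ Subgroup.center H)
    (Hm_αinv : ∀ (g : G) γ₂ γ₁, cm.α g (Hm γ₂ γ₁) = Hm γ₂ γ₁)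
    -- there is at least one point in the fiber over the source of `γ₁`
    (fiber_nonempty : ∀ x : X₀, ∃ p : E₀, π₀ p = x) :
    ∀ γ₃ γ₂ γ₁, sX γ₃ = tX γ₂ → sX γ₂ = tX γ₁ →
      (Hm γ₃ γ₂)⁻¹ * (Hm (cX γ₃ γ₂) γ₁)⁻¹ = (Hm γ₂ γ₁)⁻¹ * (Hm γ₃ (cX γ₂ γ₁))⁻¹ := by
  intro γ₃ γ₂ γ₁ h32 h21
  obtain ⟨p, hp⟩ := fiber_nonempty (sX γ₁)
  have s1 : sX γ₁ = π₀ p := hp.symm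
  set δ₁ := C γ₁ p with hδ₁
  have hsδ₁ : sE δ₁ = p := C_s γ₁ p s1
  set p₁ := tE δ₁ with hp₁
  have hπp₁ : π₀ p₁ = tX γ₁ := π₀_tC γ₁ p s1
  have s2 : sX γ₂ = π₀ p₁ := h21.trans hπp₁.symm
  set δ₂ := C γ₂ p₁ with hδ₂
  have hsδ₂ : sE δ₂ = p₁ := C_s γ₂ p₁ s2
  set p₂ := tE δ₂ with hp₂
  have hπp₂ : π₀ p₂ = tX γ₂ := π₀_tC γ₂ p₁ s2
  have s3 : sX γ₃ = π₀ p₂ := h32.trans hπp₂.symm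
  set δ₃ := C γ₃ p₂ with hδ₃
  have hsδ₃ : sE δ₃ = p₂ := C_s γ₃ p₂ s3
  -- composites in X and their sources
  have s21 : sX (cX γ₂ γ₁) = π₀ p := (cX_s γ₂ γ₁ h21).trans s1
  have s32 : sX (cX γ₃ γ₂) = π₀ p₁ := (cX_s γ₃ γ₂ h32).trans s2
  have t21 : sX γ₃ = tX (cX γ₂ γ₁) := h32.trans (cX_t γ₂ γ₁ h21).symm
  have t32 : sX (cX γ₃ γ₂) = tX γ₁ := (cX_s γ₃ γ₂ h32).trans h21
  set D := C (cX γ₂ γ₁) p with hD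
  set D' := C (cX γ₃ γ₂) p₁ with hD'
  set E := C (cX γ₃ (cX γ₂ γ₁)) p with hE
  -- key Hm equations
  have Hm21 : cE δ₂ δ₁ = act₁ D (Hm γ₂ γ₁, 1) := Hm_def γ₂ γ₁ p s1 h21
  have Hm32 : cE δ₃ δ₂ = act₁ D' (Hm γ₃ γ₂, 1) := Hm_def γ₃ γ₂ p₁ s2 h32
  have πtD : π₀ (tE D) = sX γ₃ :=
    ((π₀_tC (cX γ₂ γ₁) p s21).trans (cX_t γ₂ γ₁ h21)).trans h32.symm
  have Hm3_21 : cE (C γ₃ (tE D)) D = act₁ E (Hm γ₃ (cX γ₂ γ₁), 1) :=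
    Hm_def γ₃ (cX γ₂ γ₁) p s21 t21
  have Hm32_1 : cE D' δ₁ = act₁ (C (cX (cX γ₃ γ₂) γ₁) p) (Hm (cX γ₃ γ₂) γ₁, 1) :=
    Hm_def (cX γ₃ γ₂) γ₁ p s1 t32
  have hEE : C (cX (cX γ₃ γ₂) γ₁) p = E := by
    rw [hE, cX_assoc γ₃ γ₂ γ₁ h32 h21]
  -- express δ₃ via C at tE D
  have hp₂D : p₂ = act₀ (tE D) (cm.τ (Hm γ₂ γ₁) * 1) := by
    have := cE_t δ₂ δ₁ (hsδ₂.trans hp₁)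
    rw [Hm21] at this
    rw [hp₂, ← this, tE_act]
  have hδ₃D : δ₃ = act₁ (C γ₃ (tE D)) (1, cm.τ (Hm γ₂ γ₁) * 1) := by
    rw [hδ₃, hp₂D, C_act γ₃ (tE D) _ πtD.symm]
  -- left association
  have left : cE δ₃ (cE δ₂ δ₁) = act₁ E (Hm γ₃ (cX γ₂ γ₁) * Hm γ₂ γ₁, 1) := by
    rw [Hm21, hδ₃D,
      interchange (C γ₃ (tE D)) D 1 (Hm γ₂ γ₁) _ 1 (C_s γ₃ (tE D) πtD.symm) rfl,
      Hm3_21, act₁_mul]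
    simp
  -- right association
  have right : cE (cE δ₃ δ₂) δ₁ = act₁ E (Hm (cX γ₃ γ₂) γ₁ * Hm γ₃ γ₂, 1) := by
    have hδ₁' : δ₁ = act₁ δ₁ (1, 1) := (act₁_one δ₁).symm
    rw [Hm32]
    nth_rewrite 1 [hδ₁']
    rw [interchange D' δ₁ (Hm γ₃ γ₂) 1 1 1 ((C_s (cX γ₃ γ₂) p₁ s32).trans hp₁)
        (by simp), Hm32_1, hEE, act₁_mul]
    simp
  have assoc : cE (cE δ₃ δ₂) δ₁ = cE δ₃ (cE δ₂ δ₁) :=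
    cE_assoc δ₃ δ₂ δ₁ (hsδ₃.trans hp₂) (hsδ₂.trans hp₁)
  have key : Hm (cX γ₃ γ₂) γ₁ * Hm γ₃ γ₂ = Hm γ₃ (cX γ₂ γ₁) * Hm γ₂ γ₁ := by
    have := free₁ E _ _ ((right.symm.trans assoc).trans left)
    exact congrArg Prod.fst this
  rw [← mul_inv_rev, ← mul_inv_rev, key]
end

section
/- Let (π: E_G → X₀, μ, X) be a pseudo-principal (G,H,τ,α)-bundle over a groupoid X, i.e. a principal G-bundle over X₀ with a map μ: s*E_G → E_G covering the target and commuting with the G-action, together with maps H_u: E_G → H and H_m: X₁×_{s,t}X₁ → H satisfying the coherence conditions (a)–(k). Then the set (s*E_G) × H with source s(γ,p,h) = p, target t(γ,p,h) = μ(γ,p)τ(h⁻¹), composition (γ₂,p₂,h₂)∘(γ₁,p₁,h₁) = (γ₂∘γ₁, p₁, h₂h₁H_m(γ₂,γ₁)⁻¹), unit u(p) = (1_{π(p)}, p, H_u(p)), and inverse (γ,p,h)⁻¹ = (γ⁻¹, μ(γ,p)τ(h⁻¹), H_u(p)H_m(γ⁻¹,γ)h⁻¹), forms a groupoid over E_G.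 -/
section

variable {G H X₀ X₁ E : Type*} [Group G] [Group H]

/-- Well-formedness of a triple `(γ,p,h)` in `(s*E_G) × H`: `s(γ) = π(p)`. -/
def QWF (sX : X₁ → X₀) (π : E → X₀) (q : X₁ × E × H) : Prop := sX q.1 = π q.2.1

/-- Source: `(γ,p,h) ↦ p`. -/
def qSrc (q : X₁ × E × H) : E := q.2.1

/-- Target: `(γ,p,h) ↦ μ(γ,p)·τ(h⁻¹)`. -/
def qTgt (cm : CrossedModule G H) (act : E → G → E) (μ : X₁ → E → E)
    (q : X₁ × E × H) : E :=
  act (μ q.1 q.2.1) (cm.τ q.2.2⁻¹)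

/-- Composition: `(γ₂,p₂,h₂)∘(γ₁,p₁,h₁) = (γ₂∘γ₁, p₁, h₂h₁·H_m(γ₂,γ₁)⁻¹)`. -/
def qComp (cX : X₁ → X₁ → X₁) (Hm : X₁ → X₁ → H)
    (q₂ q₁ : X₁ × E × H) : X₁ × E × H :=
  (cX q₂.1 q₁.1, q₁.2.1, q₂.2.2 * q₁.2.2 * (Hm q₂.1 q₁.1)⁻¹)

/-- Unit: `p ↦ (1_{π(p)}, p, H_u(p))`. -/
def qUnit (uX : X₀ → X₁) (π : E → X₀) (Hu : E → H) (p : E) : X₁ × E × H :=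
  (uX (π p), p, Hu p)

/-- Inverse: `(γ,p,h) ↦ (γ⁻¹, μ(γ,p)τ(h⁻¹), H_u(p)·H_m(γ⁻¹,γ)·h⁻¹)`. -/
def qInv (cm : CrossedModule G H) (ivX : X₁ → X₁) (act : E → G → E) (μ : X₁ → E → E)
    (Hu : E → H) (Hm : X₁ → X₁ → H) (q : X₁ × E × H) : X₁ × E × H :=
  (ivX q.1, act (μ q.1 q.2.1) (cm.τ q.2.2⁻¹), Hu q.2.1 * Hm (ivX q.1) q.1 * q.2.2⁻¹)

/-- Auxiliary computation for associativity of `qComp`. -/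
lemma aux_assoc19 {H : Type*} [Group H] (h₃ h₂ h₁ u v w x : H)
    (hu : ∀ a : H, a * u⁻¹ = u⁻¹ * a)
    (heq : u⁻¹ * v⁻¹ = w⁻¹ * x⁻¹) :
    h₃ * h₂ * u⁻¹ * h₁ * v⁻¹ = h₃ * (h₂ * h₁ * w⁻¹) * x⁻¹ := by
  calc h₃ * h₂ * u⁻¹ * h₁ * v⁻¹
      = h₃ * h₂ * (h₁ * u⁻¹) * v⁻¹ := by rw [mul_assoc (h₃ * h₂) u⁻¹ h₁, ← hu h₁]
    _ = h₃ * h₂ * h₁ * (u⁻¹ * v⁻¹) := by group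
    _ = h₃ * h₂ * h₁ * (w⁻¹ * x⁻¹) := by rw [heq]
    _ = h₃ * (h₂ * h₁ * w⁻¹) * x⁻¹ := by group

/-- Auxiliary computation for the right-inverse law of `qComp`. -/
lemma aux_inv19 {H : Type*} [Group H] (h a b b' u : H)
    (hca : h * a = a * h) (hcb : h * b = b * h)
    (hk : b * b'⁻¹ = a⁻¹ * u) :
    h * (a * b * h⁻¹) * b'⁻¹ = u := by
  have h1 : h * (a * b * h⁻¹) = a * b := by
    rw [← mul_assoc, ← mul_assoc, hca, mul_assoc a h b, hcb, ← mul_assoc,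
      mul_assoc (a * b), mul_inv_cancel, mul_one]
  rw [h1, mul_assoc, hk, ← mul_assoc, mul_inv_cancel, one_mul]

/-- Given a pseudo-principal `(G,H,τ,α)`-bundle over a groupoid `X` — a principal
`G`-bundle `π : E_G → X₀` with a map `μ : s*E_G → E_G` covering the target and commuting
with the `G`-action, together with the unital and compositional deviations `H_u`, `H_m`
satisfying the coherence conditions (a)–(k) — the set `(s*E_G) × H`, with source
`(γ,p,h) ↦ p`, target `(γ,p,h) ↦ μ(γ,p)τ(h⁻¹)`, composition
`(γ₂,p₂,h₂)∘(γ₁,p₁,h₁) = (γ₂∘γ₁, p₁, h₂h₁H_m(γ₂,γ₁)⁻¹)`, unit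
`u(p) = (1_{π(p)}, p, H_u(p))` and inverse
`(γ,p,h)⁻¹ = (γ⁻¹, μ(γ,p)τ(h⁻¹), H_u(p)H_m(γ⁻¹,γ)h⁻¹)`, forms a groupoid over `E_G`. -/
theorem stmt19 (cm : CrossedModule G H)
    (sX tX : X₁ → X₀) (uX : X₀ → X₁) (cX : X₁ → X₁ → X₁) (ivX : X₁ → X₁)
    (π : E → X₀) (act : E → G → E) (μ : X₁ → E → E)
    (Hu : E → H) (Hm : X₁ → X₁ → H)
    -- groupoid axioms for `X`
    (cX_s : ∀ γ₂ γ₁, sX γ₂ = tX γ₁ → sX (cX γ₂ γ₁) = sX γ₁)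
    (cX_t : ∀ γ₂ γ₁, sX γ₂ = tX γ₁ → tX (cX γ₂ γ₁) = tX γ₂)
    (cX_assoc : ∀ γ₃ γ₂ γ₁, sX γ₃ = tX γ₂ → sX γ₂ = tX γ₁ →
      cX (cX γ₃ γ₂) γ₁ = cX γ₃ (cX γ₂ γ₁))
    (uX_s : ∀ x, sX (uX x) = x) (uX_t : ∀ x, tX (uX x) = x)
    (cX_unit_r : ∀ γ, cX γ (uX (sX γ)) = γ) (cX_unit_l : ∀ γ, cX (uX (tX γ)) γ = γ)
    (ivX_s : ∀ γ, sX (ivX γ) = tX γ) (ivX_t : ∀ γ, tX (ivX γ) = sX γ)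
    (cX_inv_l : ∀ γ, cX (ivX γ) γ = uX (sX γ)) (cX_inv_r : ∀ γ, cX γ (ivX γ) = uX (tX γ))
    -- principal `G`-bundle axioms
    (act_one : ∀ p, act p 1 = p)
    (act_mul : ∀ p g g', act (act p g) g' = act p (g * g'))
    (act_free : ∀ p g g', act p g = act p g' → g = g')
    (π_act : ∀ p g, π (act p g) = π p)
    -- `μ` covers the target map and commutes with the `G`-action
    (π_μ : ∀ γ p, sX γ = π p → π (μ γ p) = tX γ)
    (μ_act : ∀ γ p g, sX γ = π p → μ γ (act p g) = act (μ γ p) g)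
    -- coherence conditions (a)–(k)
    (ca : ∀ p, μ (uX (π p)) p = act p (cm.τ (Hu p)))
    (cb : ∀ γ₂ γ₁ p, sX γ₂ = tX γ₁ → sX γ₁ = π p →
      μ γ₂ (μ γ₁ p) = act (μ (cX γ₂ γ₁) p) (cm.τ (Hm γ₂ γ₁)))
    (cc : ∀ γ p, sX γ = π p → Hm γ (uX (π p)) = Hu p)
    (cd : ∀ γ p, sX γ = π p → Hm (uX (tX γ)) γ = Hu (μ γ p))
    (ce : ∀ p g, Hu (act p g) = Hu p)
    (cf : ∀ p (g : G), cm.α g⁻¹ (Hu p) = Hu p)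
    (cg : ∀ p, Hu p ∈ Subgroup.center H)
    (ch : ∀ (g : G) γ₂ γ₁, cm.α g⁻¹ (Hm γ₂ γ₁)⁻¹ = (Hm γ₂ γ₁)⁻¹)
    (ci : ∀ γ₂ γ₁, Hm γ₂ γ₁ ∈ Subgroup.center H)
    (cj : ∀ γ₃ γ₂ γ₁, sX γ₃ = tX γ₂ → sX γ₂ = tX γ₁ →
      (Hm γ₃ γ₂)⁻¹ * (Hm (cX γ₃ γ₂) γ₁)⁻¹ = (Hm γ₂ γ₁)⁻¹ * (Hm γ₃ (cX γ₂ γ₁))⁻¹)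
    (ck : ∀ γ p, sX γ = π p →
      Hm (ivX γ) γ * (Hm γ (ivX γ))⁻¹ = (Hu p)⁻¹ * Hu (μ γ p)) :
    -- the structure maps stay among well-formed triples
    (∀ p : E, QWF sX π (qUnit uX π Hu p)) ∧
    (∀ q, QWF sX π q → QWF sX π (qInv cm ivX act μ Hu Hm q)) ∧
    (∀ q₂ q₁, QWF sX π q₂ → QWF sX π q₁ → qSrc q₂ = qTgt cm act μ q₁ →
      QWF sX π (qComp cX Hm q₂ q₁)) ∧
    -- source and target of units
    (∀ p : E, qSrc (qUnit uX π Hu p) = p ∧ qTgt cm act μ (qUnit uX π Hu p) = p) ∧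
    -- source and target of compositions
    (∀ q₂ q₁ : X₁ × E × H, QWF sX π q₂ → QWF sX π q₁ → qSrc q₂ = qTgt cm act μ q₁ →
      qSrc (qComp cX Hm q₂ q₁) = qSrc q₁ ∧
      qTgt cm act μ (qComp cX Hm q₂ q₁) = qTgt cm act μ q₂) ∧
    -- unit laws
    (∀ q : X₁ × E × H, QWF sX π q →
      qComp cX Hm q (qUnit uX π Hu (qSrc q)) = q ∧
      qComp cX Hm (qUnit uX π Hu (qTgt cm act μ q)) q = q) ∧
    -- associativity
    (∀ q₃ q₂ q₁ : X₁ × E × H, QWF sX π q₃ → QWF sX π q₂ → QWF sX π q₁ →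
      qSrc q₃ = qTgt cm act μ q₂ → qSrc q₂ = qTgt cm act μ q₁ →
      qComp cX Hm (qComp cX Hm q₃ q₂) q₁ = qComp cX Hm q₃ (qComp cX Hm q₂ q₁)) ∧
    -- inverses
    (∀ q : X₁ × E × H, QWF sX π q →
      qSrc (qInv cm ivX act μ Hu Hm q) = qTgt cm act μ q ∧
      qTgt cm act μ (qInv cm ivX act μ Hu Hm q) = qSrc q ∧
      qComp cX Hm (qInv cm ivX act μ Hu Hm q) q = qUnit uX π Hu (qSrc q) ∧
      qComp cX Hm q (qInv cm ivX act μ Hu Hm q) = qUnit uX π Hu (qTgt cm act μ q)) := by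
  -- commutation helpers from centrality
  have cgc : ∀ (p : E) (a : H), a * Hu p = Hu p * a := fun p a =>
    Subgroup.mem_center_iff.mp (cg p) a
  have cic : ∀ (γ₂ γ₁ : X₁) (a : H), a * Hm γ₂ γ₁ = Hm γ₂ γ₁ * a := fun γ₂ γ₁ a =>
    Subgroup.mem_center_iff.mp (ci γ₂ γ₁) a
  have cicinv : ∀ (γ₂ γ₁ : X₁) (a : H), a * (Hm γ₂ γ₁)⁻¹ = (Hm γ₂ γ₁)⁻¹ * a :=
    fun γ₂ γ₁ a =>
      Subgroup.mem_center_iff.mp ((Subgroup.center H).inv_mem (ci γ₂ γ₁)) a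
  refine ⟨?_, ?_, ?_, ?_, ?_, ?_, ?_, ?_⟩
  · -- units are well-formed
    intro p
    show sX (uX (π p)) = π p
    exact uX_s (π p)
  · -- inverses are well-formed
    rintro ⟨γ, p, h⟩ hq
    have hq' : sX γ = π p := hq
    show sX (ivX γ) = π (act (μ γ p) (cm.τ h⁻¹))
    rw [π_act, π_μ _ _ hq', ivX_s]
  · -- compositions are well-formed
    rintro ⟨γ₂, p₂, h₂⟩ ⟨γ₁, p₁, h₁⟩ hq₂ hq₁ hst
    have hq₂' : sX γ₂ = π p₂ := hq₂
    have hq₁' : sX γ₁ = π p₁ := hq₁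
    have hst' : p₂ = act (μ γ₁ p₁) (cm.τ h₁⁻¹) := hst
    have h21 : sX γ₂ = tX γ₁ := by rw [hq₂', hst', π_act, π_μ _ _ hq₁']
    show sX (cX γ₂ γ₁) = π p₁
    rw [cX_s _ _ h21, hq₁']
  · -- source and target of units
    intro p
    refine ⟨rfl, ?_⟩
    show act (μ (uX (π p)) p) (cm.τ (Hu p)⁻¹) = p
    rw [ca p, act_mul, ← map_mul, mul_inv_cancel, map_one, act_one]
  · -- source and target of compositions
    rintro ⟨γ₂, p₂, h₂⟩ ⟨γ₁, p₁, h₁⟩ hq₂ hq₁ hst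
    have hq₂' : sX γ₂ = π p₂ := hq₂
    have hq₁' : sX γ₁ = π p₁ := hq₁
    have hst' : p₂ = act (μ γ₁ p₁) (cm.τ h₁⁻¹) := hst
    have h21 : sX γ₂ = tX γ₁ := by rw [hq₂', hst', π_act, π_μ _ _ hq₁']
    have hμ : sX γ₂ = π (μ γ₁ p₁) := by rw [h21, π_μ _ _ hq₁']
    refine ⟨rfl, ?_⟩
    show act (μ (cX γ₂ γ₁) p₁) (cm.τ (h₂ * h₁ * (Hm γ₂ γ₁)⁻¹)⁻¹)
      = act (μ γ₂ p₂) (cm.τ h₂⁻¹)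
    rw [hst', μ_act _ _ _ hμ, cb _ _ _ h21 hq₁', act_mul, act_mul,
      ← map_mul, ← map_mul]
    congr 2
    group
  · -- unit laws
    rintro ⟨γ, p, h⟩ hq
    have hq' : sX γ = π p := hq
    constructor
    · show (cX γ (uX (π p)), p, h * Hu p * (Hm γ (uX (π p)))⁻¹) = (γ, p, h)
      rw [cc _ _ hq', mul_inv_cancel_right, ← hq', cX_unit_r]
    · have hπ : π (act (μ γ p) (cm.τ h⁻¹)) = tX γ := by rw [π_act, π_μ _ _ hq']
      show (cX (uX (π (act (μ γ p) (cm.τ h⁻¹)))) γ, p,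
          Hu (act (μ γ p) (cm.τ h⁻¹)) * h
            * (Hm (uX (π (act (μ γ p) (cm.τ h⁻¹)))) γ)⁻¹) = (γ, p, h)
      rw [hπ, cX_unit_l, ce, cd _ _ hq', ← cgc (μ γ p) h, mul_inv_cancel_right]
  · -- associativity
    rintro ⟨γ₃, p₃, h₃⟩ ⟨γ₂, p₂, h₂⟩ ⟨γ₁, p₁, h₁⟩ hq₃ hq₂ hq₁ hst₃ hst₂
    have hq₃' : sX γ₃ = π p₃ := hq₃
    have hq₂' : sX γ₂ = π p₂ := hq₂
    have hq₁' : sX γ₁ = π p₁ := hq₁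
    have hst₃' : p₃ = act (μ γ₂ p₂) (cm.τ h₂⁻¹) := hst₃
    have hst₂' : p₂ = act (μ γ₁ p₁) (cm.τ h₁⁻¹) := hst₂
    have h32 : sX γ₃ = tX γ₂ := by rw [hq₃', hst₃', π_act, π_μ _ _ hq₂']
    have h21 : sX γ₂ = tX γ₁ := by rw [hq₂', hst₂', π_act, π_μ _ _ hq₁']
    show (cX (cX γ₃ γ₂) γ₁, p₁, (h₃ * h₂ * (Hm γ₃ γ₂)⁻¹) * h₁ * (Hm (cX γ₃ γ₂) γ₁)⁻¹)
      = (cX γ₃ (cX γ₂ γ₁), p₁, h₃ * (h₂ * h₁ * (Hm γ₂ γ₁)⁻¹) * (Hm γ₃ (cX γ₂ γ₁))⁻¹)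
    rw [cX_assoc _ _ _ h32 h21,
      aux_assoc19 h₃ h₂ h₁ _ _ _ _ (cicinv γ₃ γ₂) (cj _ _ _ h32 h21)]
  · -- inverses
    rintro ⟨γ, p, h⟩ hq
    have hq' : sX γ = π p := hq
    have h1 : sX (ivX γ) = π (μ γ p) := by rw [ivX_s, π_μ _ _ hq']
    have h2 : sX (ivX γ) = tX γ := ivX_s γ
    have hπ : π (act (μ γ p) (cm.τ h⁻¹)) = tX γ := by rw [π_act, π_μ _ _ hq']
    refine ⟨rfl, ?_, ?_, ?_⟩
    · show act (μ (ivX γ) (act (μ γ p) (cm.τ h⁻¹)))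
          (cm.τ (Hu p * Hm (ivX γ) γ * h⁻¹)⁻¹) = p
      rw [μ_act _ _ _ h1, cb _ _ _ h2 hq', cX_inv_l, hq', ca, act_mul, act_mul,
        act_mul, ← map_mul, ← map_mul, ← map_mul]
      have key : ∀ X : H, X = 1 → act p (cm.τ X) = p := fun X hX => by
        rw [hX, map_one, act_one]
      exact key _ (by group)
    · show (cX (ivX γ) γ, p, (Hu p * Hm (ivX γ) γ * h⁻¹) * h * (Hm (ivX γ) γ)⁻¹)
        = (uX (π p), p, Hu p)
      rw [cX_inv_l, hq', inv_mul_cancel_right, mul_inv_cancel_right]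
    · show (cX γ (ivX γ), act (μ γ p) (cm.τ h⁻¹),
          h * (Hu p * Hm (ivX γ) γ * h⁻¹) * (Hm γ (ivX γ))⁻¹)
        = (uX (π (act (μ γ p) (cm.τ h⁻¹))), act (μ γ p) (cm.τ h⁻¹),
          Hu (act (μ γ p) (cm.τ h⁻¹)))
      rw [hπ, cX_inv_r, ce,
        aux_inv19 h (Hu p) (Hm (ivX γ) γ) (Hm γ (ivX γ)) (Hu (μ γ p))
          (cgc p h) (cic _ _ h) (ck γ p hq')]

end
end
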